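/- Suppose T : E × F → E × F is an invertible continuous linear map preserving the subspace {0} × F, written in block form T(v, w) = (A v, C v + K w), and suppose there exists λ > 1 with ‖K‖ < λ⁻¹·m(A) where m(A) is the conorm of A. Then for any continuous linear map s : E → F with ‖s‖ ≤ 1, the image T(graph s) is the graph of a continuous linear map s' : E → F with ‖s'‖ ≤ (‖C‖ + ‖K‖)·m(A)⁻¹. -/
import Mathlib


/-- For the block-triangular map `T(v,w) = (A v, C v + K w)` with `A` invertible and
`‖K‖ < λ⁻¹ · m(A)`, the image of the graph of any `s` with `‖s‖ ≤ 1` is the graph of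
`s' = (C + K ∘ s) ∘ A⁻¹`, and `‖s'‖ ≤ (‖C‖ + ‖K‖) · m(A)⁻¹`. -/
theorem graph_transform_image {E F : Type*}
    [NormedAddCommGroup E] [NormedSpace ℝ E] [FiniteDimensional ℝ E]
    [NormedAddCommGroup F] [NormedSpace ℝ F] [FiniteDimensional ℝ F]
    (A : E ≃L[ℝ] E) (C : E →L[ℝ] F) (K : F →L[ℝ] F)
    (lam : ℝ) (hlam : 1 < lam)
    (hK : ‖K‖ < lam⁻¹ * ‖(A.symm : E →L[ℝ] E)‖⁻¹)
    (s : E →L[ℝ] F) (hs : ‖s‖ ≤ 1) :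
    (fun vw : E × F => ((A vw.1 : E), C vw.1 + K vw.2)) '' {p : E × F | p.2 = s p.1}
        = {p : E × F | p.2 = ((C + K.comp s).comp (A.symm : E →L[ℝ] E)) p.1} ∧
      ‖(C + K.comp s).comp (A.symm : E →L[ℝ] E)‖
        ≤ (‖C‖ + ‖K‖) * (‖(A.symm : E →L[ℝ] E)‖⁻¹)⁻¹ := by
  constructor
  · ext ⟨v, w⟩
    simp only [Set.mem_image, Set.mem_setOf_eq]
    constructor
    · rintro ⟨⟨x, y⟩, hxy, hq⟩
      simp only [Set.mem_setOf_eq] at hxy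
      obtain ⟨h1, h2⟩ := Prod.mk.injEq .. ▸ hq
      subst hxy h1 h2
      simp [ContinuousLinearMap.comp_apply]
    · intro h
      refine ⟨(A.symm v, s (A.symm v)), rfl, ?_⟩
      simp only [Prod.mk.injEq]
      refine ⟨A.apply_symm_apply v, ?_⟩
      rw [h]; simp [ContinuousLinearMap.comp_apply]
  · rw [inv_inv]
    calc ‖(C + K.comp s).comp (A.symm : E →L[ℝ] E)‖
        ≤ ‖C + K.comp s‖ * ‖(A.symm : E →L[ℝ] E)‖ := ContinuousLinearMap.opNorm_comp_le _ _
      _ ≤ (‖C‖ + ‖K‖) * ‖(A.symm : E →L[ℝ] E)‖ := by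
          apply mul_le_mul_of_nonneg_right _ (norm_nonneg _)
          calc ‖C + K.comp s‖ ≤ ‖C‖ + ‖K.comp s‖ := norm_add_le _ _
            _ ≤ ‖C‖ + ‖K‖ * ‖s‖ := by gcongr; exact ContinuousLinearMap.opNorm_comp_le _ _
            _ ≤ ‖C‖ + ‖K‖ * 1 := by gcongr
            _ = ‖C‖ + ‖K‖ := by ring
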